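/- arXiv:1703.06706 — 3 statements merged into one kernel-verified Lean document; each statement's English description precedes it below -/
import Mathlib

section
/- For every infinite cardinal λ and all positive integers c and d, there exists a cardinal κ > λ such that for every commutative semigroup (G,+) of cardinality κ and every coloring f : G → c, there exist a subset H ⊆ G of cardinality λ and positive integers a, b such that all sums of j-many distinct elements of H, for every j in the arithmetic progression {a, a+b, a+2b, …, a+d·b}, receive the same color under f. -/
open Cardinal

universe u

/-- Sum of a nonempty tuple of elements of a commutative semigroup. -/
def tupSum {G : Type u} [AddCommSemigroup G] : {n : ℕ} → (Fin (n + 1) → G) → G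
  | 0, g => g 0
  | _ + 1, g => tupSum (fun i => g i.castSucc) + g (Fin.last _)

/-- `FSMono f A H i` : all sums of `j`-many pairwise distinct elements of `H`,
for `j ∈ A`, have color `i` under `f` (i.e. `FS^A(H)` is monochromatic of color `i`). -/
def FSMono {G : Type u} [AddCommSemigroup G] {c : ℕ} (f : G → Fin c)
    (A : Set ℕ) (H : Set G) (i : Fin c) : Prop :=
  ∀ m : ℕ, m + 1 ∈ A → ∀ g : Fin (m + 1) → G, Function.Injective g →
    (∀ j, g j ∈ H) → f (tupSum g) = i

/-!
Well-order `G` and let `N` be a Van der Waerden bound for `c` colours and progressions of length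
`d + 1`. Colour each `(N + 1)`-element subset of `G` by the vector of colours of the sums of its
`j` least elements, `j ≤ N`. There are finitely many colours, so by the Erdős–Rado theorem a set
`G` of cardinality above `expTower l N` has a homogeneous subset `H` of cardinality `l`. After
discarding the points of `H` with fewer than `l` points of `H` above them, any `j ≤ N` distinct
points of `H` are the `j` least points of some `(N + 1)`-subset of `H`, so the colour of their sum
depends on `j` alone, and Van der Waerden for this colouring of `{1, …, N}` gives the progression.

Erdős–Rado is proved by induction on the exponent: if `2 ^ μ < #θ`, a set of size `2 ^ μ` closed
under realising types over its subsets of size `μ` yields a sequence of length `μ⁺` on which the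
colour of a set depends only on its elements other than the last, and the induction hypothesis
applies to the sequence.
-/

open Set Combinatorics

def expTower (l : Cardinal.{u}) : ℕ → Cardinal.{u}
  | 0 => l
  | n + 1 => 2 ^ expTower l n

theorem le_expTower (l : Cardinal.{u}) : ∀ n, l ≤ expTower l n
  | 0 => le_rfl
  | n + 1 => (le_expTower l n).trans (cantor _).le

namespace Cardinal

theorem mk_iUnion_le_of_le {α ι : Type u} {ν : Cardinal.{u}} (hν : ℵ₀ ≤ ν) (hι : #ι ≤ ν)
    (f : ι → Set α) (hf : ∀ i, #(f i) ≤ ν) : #(⋃ i, f i) ≤ ν :=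
  (mk_iUnion_le f).trans (mul_le_of_le hν hι (ciSup_le' hf))

theorem mk_Iio_toType_succ_ord_le {μ : Cardinal.{u}} (α : (Order.succ μ).ord.ToType) :
    #(Iio α) ≤ μ :=
  Order.lt_succ_iff.mp <| by simpa using mk_Iio_lt α (by simp)

theorem mk_finset_le_of_le {α : Type u} {μ : Cardinal.{u}} (hμ : ℵ₀ ≤ μ) (hα : #α ≤ μ) :
    #(Finset α) ≤ μ := by
  classical
  exact (mk_le_of_surjective List.toFinset_surjective).trans
    ((mk_list_le_max α).trans (max_le hμ hα))

theorem mk_finset_arrow_le {α ξ : Type u} {μ ν : Cardinal.{u}} (hμ : ℵ₀ ≤ μ) (hν : ν ^ μ = ν)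
    (hν₀ : ν ≠ 0) (hα : #α ≤ μ) (hξ : #ξ ≤ ν) : #(Finset α → ξ) ≤ ν := by
  rw [← power_def]
  calc #ξ ^ #(Finset α) ≤ ν ^ μ :=
        (power_le_power_right hξ).trans (power_le_power_left hν₀ (mk_finset_le_of_le hμ hα))
    _ = ν := hν

end Cardinal

theorem exists_forall_lt_of_mk_lt_cof {α : Type u} [LinearOrder α] {s : Set α}
    (hs : #s < Order.cof α) : ∃ a, ∀ x ∈ s, x < a :=
  not_isCofinal_iff.mp fun h => (Order.cof_le h).not_gt hs

theorem exists_closed_of_mk_le {θ : Type u} {μ ν : Cardinal.{u}} (hμ : ℵ₀ ≤ μ)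
    (hμν : μ < ν) (hν : ν ^ μ = ν) (W : Set θ → Set θ)
    (hW : ∀ Y : Set θ, #Y ≤ μ → #(W Y) ≤ ν) :
    ∃ X : Set θ, #X ≤ ν ∧ ∀ Y ⊆ X, #Y ≤ μ → W Y ⊆ X := by
  have hν₀ : ℵ₀ ≤ ν := hμ.trans hμν.le
  let ι := (Order.succ μ).ord.ToType
  have hι : #ι ≤ ν := by rw [mk_toType, card_ord]; exact Order.succ_le_of_lt hμν
  let step (A : Set θ) : Set θ := ⋃ Y : {Y : Set θ // Y ⊆ A ∧ #Y ≤ μ}, W Y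
  have mk_step (A : Set θ) (hA : #A ≤ ν) : #(step A) ≤ ν :=
    mk_iUnion_le_of_le hν₀ ((mk_bounded_subset_le A μ).trans
      (hν ▸ power_le_power_right (max_le hA hν₀))) _ fun Y => hW Y Y.2.2
  let X : ι → Set θ := WellFoundedLT.fix fun α X => step (⋃ β : Iio α, X β β.2)
  have X_eq (α : ι) : X α = step (⋃ β : Iio α, X β) := WellFoundedLT.fix_eq _ α
  have mk_X (α : ι) : #(X α) ≤ ν := by
    induction α using WellFoundedLT.induction with
    | ind α ih =>
      rw [X_eq]
      exact mk_step _ (mk_iUnion_le_of_le hν₀ ((mk_Iio_toType_succ_ord_le α).trans hμν.le) _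
        fun β => ih β β.2)
  refine ⟨⋃ α, X α, mk_iUnion_le_of_le hν₀ hι X mk_X, fun Y hY hYμ => ?_⟩
  choose stage hstage using fun y : Y => mem_iUnion.mp (hY y.2)
  -- `Y` is too small to be cofinal in the regular cardinal `μ⁺`, so it appears at a single stage
  obtain ⟨α, hα⟩ := exists_forall_lt_of_mk_lt_cof (s := range stage) <| by
    rw [Ordinal.cof_toType, (isRegular_succ hμ).cof_ord]
    exact mk_range_le.trans_lt (hYμ.trans_lt (Order.lt_succ μ))
  have hYα : Y ⊆ ⋃ β : Iio α, X β := fun y hy =>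
    mem_iUnion.mpr ⟨⟨_, hα _ (mem_range_self ⟨y, hy⟩)⟩, hstage _⟩
  calc W Y ⊆ X α := X_eq α ▸ subset_iUnion_of_subset ⟨Y, hYα, hYμ⟩ subset_rfl
    _ ⊆ ⋃ α, X α := subset_iUnion X α

section ErdosRado

variable {θ ξ : Type u}

def IsHomogeneous (F : Finset θ → ξ) (k : ℕ) (H : Set θ) : Prop :=
  ∃ i, ∀ s : Finset θ, ↑s ⊆ H → s.card = k → F s = i

variable [DecidableEq θ]

def typeOver (F : Finset θ → ξ) (Y : Set θ) (z : θ) : Finset Y → ξ :=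
  fun t => F (insert z (t.map (Function.Embedding.subtype _)))

def IsEndHomogeneous {ι : Type*} [Preorder ι] (F : Finset θ → ξ) (a : ι → θ) (z : θ) :
    Prop :=
  ∀ α, ∀ t : Finset θ, ↑t ⊆ a '' Iio α → F (insert (a α) t) = F (insert z t)

theorem exists_isEndHomogeneous {μ ν : Cardinal.{u}} (hμ : ℵ₀ ≤ μ) (hμν : μ < ν)
    (hν : ν ^ μ = ν) (F : Finset θ → ξ) (hξ : #ξ ≤ ν) (hθ : ν < #θ) :
    ∃ (a : (Order.succ μ).ord.ToType → θ) (z : θ),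
      Function.Injective a ∧ IsEndHomogeneous F a z := by
  classical
  have hν₀ : ν ≠ 0 := (aleph0_pos.trans_le (hμ.trans hμν.le)).ne'
  have : Nonempty θ := mk_ne_zero_iff.mp (hν₀.bot_lt.trans hθ).ne'
  -- `W Y` realises every type over `Y` of a point outside `Y` exactly once
  choose W hWsub hW using fun Y : Set θ => exists_subset_bijOn Yᶜ (typeOver F Y)
  obtain ⟨X, hXν, hX⟩ := exists_closed_of_mk_le hμ hμν hν W fun Y hY => by
    rw [← mk_image_eq_of_injOn _ _ (hW Y).injOn, (hW Y).image_eq]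
    exact (mk_set_le _).trans (mk_finset_arrow_le hμ hν hν₀ hY hξ)
  obtain ⟨z, hzX⟩ : ∃ z, z ∉ X := by
    by_contra! h
    exact hθ.not_ge (by simpa [eq_univ_of_forall h] using hXν)
  let pick (Y : Set θ) : θ := Function.invFunOn (typeOver F Y) (W Y) (typeOver F Y z)
  have pick_spec (Y : Set θ) (hYX : Y ⊆ X) (hYμ : #Y ≤ μ) :
      pick Y ∈ X ∧ pick Y ∉ Y ∧ typeOver F Y (pick Y) = typeOver F Y z := by
    have hex : ∃ w ∈ W Y, typeOver F Y w = typeOver F Y z := by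
      rw [← mem_image, (hW Y).image_eq]
      exact mem_image_of_mem _ fun hz => hzX (hYX hz)
    exact ⟨hX Y hYX hYμ (Function.invFunOn_mem hex), hWsub Y (Function.invFunOn_mem hex),
      Function.invFunOn_eq hex⟩
  let a : (Order.succ μ).ord.ToType → θ :=
    WellFoundedLT.fix fun α a => pick (range fun β : Iio α => a β β.2)
  have a_eq (α) : a α = pick (a '' Iio α) := by
    rw [image_eq_range]; exact WellFoundedLT.fix_eq _ α
  have mk_image_Iio (α) : #(a '' Iio α) ≤ μ := mk_image_le.trans (mk_Iio_toType_succ_ord_le α)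
  have a_mem (α) : a α ∈ X := by
    induction α using WellFoundedLT.induction with
    | ind α ih =>
      rw [a_eq]
      exact (pick_spec _ (image_subset_iff.mpr ih) (mk_image_Iio α)).1
  have a_spec (α) : a α ∉ a '' Iio α ∧
      typeOver F (a '' Iio α) (a α) = typeOver F (a '' Iio α) z :=
    (a_eq α ▸ pick_spec _ (image_subset_iff.mpr fun β _ => a_mem β) (mk_image_Iio α)).2
  refine ⟨a, z, Function.Injective.of_lt_imp_ne fun β γ hlt h => (a_spec γ).1 ⟨β, hlt, h⟩,
    fun α t ht => ?_⟩
  have := congrFun (a_spec α).2 (t.subtype (· ∈ a '' Iio α))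
  rwa [typeOver, typeOver, Finset.subtype_map_of_mem ht] at this

theorem IsEndHomogeneous.isHomogeneous_image {ι : Type u} [LinearOrder ι] {F : Finset θ → ξ}
    {a : ι → θ} {z : θ} (hF : IsEndHomogeneous F a z) (ha : Function.Injective a) {n : ℕ}
    {H : Set ι} (hH : IsHomogeneous (fun u => F (insert z (u.image a))) (n + 1) H) :
    IsHomogeneous F (n + 2) (a '' H) := by
  obtain ⟨i, hi⟩ := hH
  refine ⟨i, fun s hs hcard => ?_⟩
  obtain ⟨t, htH, rfl⟩ := Finset.subset_set_image_iff.mp hs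
  rw [Finset.card_image_of_injective _ ha] at hcard
  have ht : t.Nonempty := Finset.card_pos.mp (by omega)
  have hmax := t.max'_mem ht
  have hlt (β) (hβ : β ∈ t.erase (t.max' ht)) : β < t.max' ht :=
    (t.le_max' β (Finset.mem_of_mem_erase hβ)).lt_of_ne (Finset.ne_of_mem_erase hβ)
  rw [← Finset.insert_erase hmax, Finset.image_insert,
    hF _ _ (by rw [Finset.coe_image]; exact image_mono hlt)]
  exact hi _ (fun β hβ => htH (Finset.mem_of_mem_erase hβ))
    (by rw [Finset.card_erase_of_mem hmax]; omega)

theorem exists_isHomogeneous_of_expTower_lt {l : Cardinal.{u}} (hl : ℵ₀ ≤ l) (hξ : #ξ ≤ l)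
    (n : ℕ) (F : Finset θ → ξ) (hθ : expTower l n < #θ) :
    ∃ H : Set θ, #H = l ∧ IsHomogeneous F (n + 1) H := by
  induction n generalizing θ with
  | zero =>
    obtain ⟨i, hi⟩ := infinite_pigeonhole_card (fun x => F {x}) (Order.succ l)
      (Order.succ_le_of_lt hθ) (hl.trans (Order.le_succ l))
      (by rw [(isRegular_succ hl).cof_ord]; exact hξ.trans_lt (Order.lt_succ l))
    obtain ⟨H, hHi, hH⟩ := le_mk_iff_exists_subset.mp ((Order.le_succ l).trans hi)
    refine ⟨H, hH, i, fun s hs hcard => ?_⟩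
    obtain ⟨x, rfl⟩ := Finset.card_eq_one.mp hcard
    exact hHi (hs (Finset.mem_singleton_self x))
  | succ n ih =>
    set μ := expTower l n
    have hμ : ℵ₀ ≤ μ := hl.trans (le_expTower l n)
    obtain ⟨a, z, ha, hF⟩ := exists_isEndHomogeneous hμ (cantor μ)
      (by rw [← power_mul, mul_eq_self hμ]) F
      (hξ.trans ((le_expTower l n).trans (cantor μ).le)) hθ
    obtain ⟨H, hH, hhom⟩ := ih (fun u => F (insert z (u.image a)))
      (by rw [mk_toType, card_ord]; exact Order.lt_succ μ)
    exact ⟨a '' H, by rw [mk_image_eq ha, hH], IsEndHomogeneous.isHomogeneous_image hF ha hhom⟩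

end ErdosRado

theorem exists_bound_vanDerWaerden (κ : Type*) [Finite κ] (d : ℕ) :
    ∃ N : ℕ, ∀ χ : ℕ → κ, ∃ a b : ℕ, 0 < a ∧ 0 < b ∧ a + d * b ≤ N ∧
      ∃ i : κ, ∀ k ≤ d, χ (a + k * b) = i := by
  classical
  obtain ⟨ι, _, hι⟩ := Line.exists_mono_in_high_dimension (Fin (d + 1)) κ
  refine ⟨1 + Fintype.card ι * d, fun χ => ?_⟩
  -- a monochromatic line, read through the coordinate sum, is an arithmetic progression
  obtain ⟨l, i, hl⟩ := hι fun v => χ (1 + ∑ j, (v j : ℕ))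
  set b := (Finset.univ.filter fun j => l.idxFun j = none).card
  set B := ∑ j, ((l.idxFun j).map Fin.val).getD 0
  have hsum (x : Fin (d + 1)) : ∑ j, (l x j : ℕ) = b * x + B := by
    have hcoord (o : Option (Fin (d + 1))) :
        ((o.getD x : Fin (d + 1)) : ℕ) =
          (if o = none then (x : ℕ) else 0) + (o.map Fin.val).getD 0 := by
      cases o <;> simp
    simp only [Line.apply_def, hcoord, Finset.sum_add_distrib, Finset.sum_ite, Finset.sum_const,
      smul_eq_mul, mul_zero, add_zero, b, B]
  have hb : 0 < b :=
    Finset.card_pos.mpr ⟨_, Finset.mem_filter.mpr ⟨Finset.mem_univ _, l.proper.choose_spec⟩⟩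
  refine ⟨1 + B, b, by omega, hb, ?_, i, fun k hk => ?_⟩
  · have hle : ∑ j, (l (Fin.last d) j : ℕ) ≤ Fintype.card ι * d := by
      simpa using Finset.sum_le_card_nsmul Finset.univ _ d fun j _ => Fin.is_le _
    rw [hsum, Fin.val_last] at hle
    linarith
  · have : χ (1 + ∑ j, (l ⟨k, Nat.lt_succ_of_le hk⟩ j : ℕ)) = i := hl _
    rwa [hsum, Fin.val_mk, show b * k + B = B + k * b by ring, ← add_assoc] at this

def Finset.firstElems {α : Type*} [LinearOrder α] (s : Finset α) (m : ℕ) : Finset α :=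
  s.filter fun x => (s.filter (· < x)).card < m

theorem Finset.firstElems_union_of_forall_lt {α : Type*} [LinearOrder α] {t u : Finset α}
    (h : ∀ x ∈ t, ∀ y ∈ u, x < y) : (t ∪ u).firstElems t.card = t := by
  ext x
  simp only [firstElems, mem_filter, mem_union]
  constructor
  · rintro ⟨hx | hx, hcard⟩
    · exact hx
    · exact absurd (card_le_card fun y hy => mem_filter.mpr ⟨mem_union_left _ hy, h y hy x hx⟩)
        hcard.not_ge
  · intro hx
    refine ⟨Or.inl hx, (card_le_card fun y hy => ?_).trans_lt (card_erase_lt_of_mem hx)⟩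
    obtain ⟨hy, hyx⟩ := mem_filter.mp hy
    rcases mem_union.mp hy with hy | hy
    · exact mem_erase.mpr ⟨hyx.ne, hy⟩
    · exact absurd (h x hx y hy) hyx.not_gt

theorem exists_subset_mk_eq_forall_le_mk_inter_Ioi {α : Type u} [LinearOrder α] [WellFoundedLT α]
    {H : Set α} (hH : ℵ₀ ≤ #H) :
    ∃ H₀ ⊆ H, #H₀ = #H ∧ ∀ x ∈ H₀, #H ≤ #(H₀ ∩ Ioi x : Set α) := by
  set T := {x ∈ H | #(H ∩ Ioi x : Set α) < #H}
  have hT : #T < #H := by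
    rcases T.eq_empty_or_nonempty with h | h
    · rw [h, mk_eq_zero]
      exact aleph0_pos.trans_le hH
    · obtain ⟨x₀, hx₀, hmin⟩ := wellFounded_lt.has_min T h
      have hTx₀ : T ⊆ insert x₀ (H ∩ Ioi x₀) := fun y hy =>
        (eq_or_ne y x₀).imp id fun hne => ⟨hy.1, (not_lt.mp (hmin y hy)).lt_of_ne hne.symm⟩
      exact (mk_le_mk_of_subset hTx₀).trans_lt
        (mk_insert_le.trans_lt (add_lt_of_lt hH hx₀.2 (one_lt_aleph0.trans_le hH)))
  have hsdiff (A : Set α) (hA : #H ≤ #A) : #H ≤ #(A \ T : Set α) := by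
    by_contra! hAT
    exact (hA.trans ((mk_le_mk_of_subset (subset_sdiff_union A T)).trans (mk_union_le _ _))).not_gt
      (add_lt_of_lt hH hAT hT)
  refine ⟨H \ T, sdiff_subset, (mk_le_mk_of_subset sdiff_subset).antisymm (hsdiff H le_rfl),
    fun x hx => ?_⟩
  rw [sdiff_inter_right_comm]
  exact hsdiff _ (not_lt.mp fun h => hx.2 ⟨hx.1, h⟩)

theorem coe_tupSum {G : Type u} [AddCommSemigroup G] :
    ∀ {n : ℕ} (g : Fin (n + 1) → G), ((tupSum g : G) : WithZero G) = ∑ i, (g i : WithZero G)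
  | 0, g => by simp [tupSum]
  | n + 1, g => by
    rw [tupSum, WithZero.coe_add, coe_tupSum,
      Fin.sum_univ_castSucc (f := fun i => (g i : WithZero G))]

theorem fsMono_of_forall_singleton {G : Type u} [AddCommSemigroup G] {c : ℕ} {f : G → Fin c}
    {A : Set ℕ} {H : Set G} {i : Fin c} (h : ∀ j ∈ A, FSMono f {j} H i) : FSMono f A H i :=
  fun m hm => h _ hm m rfl

theorem exists_forall_fsMono_singleton {G : Type u} [AddCommSemigroup G] [LinearOrder G]
    [WellFoundedLT G] {l : Cardinal.{u}} (hl : ℵ₀ ≤ l) {c N : ℕ} (hG : expTower l N < #G)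
    (f : G → Fin c) : ∃ H : Set G, #H = l ∧ ∃ χ : ℕ → Fin c, ∀ j ≤ N, FSMono f {j} H (χ j) := by
  classical
  obtain ⟨g₀⟩ : Nonempty G :=
    mk_ne_zero_iff.mp ((aleph0_pos.trans_le (hl.trans (le_expTower l N))).trans hG).ne'
  -- the value at `0` is junk: it is only read for the empty sum of the `0` least elements
  let f' : WithZero G → Fin c := WithZero.recZeroCoe (f g₀) f
  let F (s : Finset G) : ULift.{u} (Fin (N + 1) → Fin c) :=
    ⟨fun j => f' (∑ x ∈ s.firstElems j, (x : WithZero G))⟩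
  obtain ⟨H, hH, i, hi⟩ := exists_isHomogeneous_of_expTower_lt hl (mk_le_aleph0.trans hl) N F hG
  obtain ⟨H₀, hH₀H, hH₀, hIoi⟩ := exists_subset_mk_eq_forall_le_mk_inter_Ioi (hH ▸ hl)
  refine ⟨H₀, hH₀.trans hH, fun j => i.down (Fin.ofNat (N + 1) j), fun j hj m hm g hg hgH => ?_⟩
  obtain rfl : m + 1 = j := hm
  set t := Finset.univ.image g
  have ht : t.card = m + 1 := by simp [t, Finset.card_image_of_injective _ hg]
  have htH : ↑t ⊆ H₀ := by simpa [t, range_subset_iff] using hgH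
  have htne : t.Nonempty := Finset.univ_nonempty.image g
  obtain ⟨u, huH, hu⟩ := (infinite_coe_iff.mp (infinite_iff.mpr ((hH ▸ hl).trans
    (hIoi _ (htH (t.max'_mem htne)))))).exists_subset_card_eq (N - m)
  have hlt : ∀ x ∈ t, ∀ y ∈ u, x < y := fun x hx y hy =>
    (t.le_max' x hx).trans_lt (huH hy).2
  have hs : F (t ∪ u) = i := hi _ (by
      rw [Finset.coe_union]
      exact union_subset (htH.trans hH₀H) (huH.trans (inter_subset_left.trans hH₀H)))
    (by rw [Finset.card_union_of_disjoint (Finset.disjoint_left.mpr fun x hx hxu =>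
      (hlt x hx x hxu).false), ht, hu]; omega)
  calc f (tupSum g) = f' (∑ x ∈ t, (x : WithZero G)) := by
        rw [Finset.sum_image fun x _ y _ h => hg h, ← coe_tupSum]; rfl
    _ = (F (t ∪ u)).down (Fin.ofNat (N + 1) (m + 1)) := by
        have hfirst : (t ∪ u).firstElems (m + 1) = t :=
          ht ▸ Finset.firstElems_union_of_forall_lt hlt
        simp only [F, Fin.val_ofNat, Nat.mod_eq_of_lt (show m + 1 < N + 1 by omega), hfirst]
    _ = i.down (Fin.ofNat (N + 1) (m + 1)) := by rw [hs]

theorem stmt0_general (l : Cardinal.{u}) (hl : ℵ₀ ≤ l) (c d : ℕ) :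
    ∃ κ : Cardinal.{u}, l < κ ∧
      ∀ (G : Type u) [AddCommSemigroup G], #G = κ →
        ∀ f : G → Fin c, ∃ H : Set G, #H = l ∧
          ∃ a b : ℕ, 0 < a ∧ 0 < b ∧ ∃ i : Fin c,
            FSMono f {j | ∃ k ≤ d, j = a + k * b} H i := by
  obtain ⟨N, hN⟩ := exists_bound_vanDerWaerden (Fin c) d
  refine ⟨Order.succ (expTower l N), (le_expTower l N).trans_lt (Order.lt_succ _),
    fun G _ hG f => ?_⟩
  obtain ⟨_, _⟩ := exists_wellFoundedLT G
  obtain ⟨H, hH, χ, hχ⟩ := exists_forall_fsMono_singleton hl (hG ▸ Order.lt_succ _) f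
  obtain ⟨a, b, ha, hb, habN, i, hi⟩ := hN χ
  refine ⟨H, hH, a, b, ha, hb, i, fsMono_of_forall_singleton ?_⟩
  rintro _ ⟨k, hk, rfl⟩
  rw [← hi k hk]
  exact hχ _ ((Nat.add_le_add_left (Nat.mul_le_mul_right b hk) a).trans habN)

/-- Uncountable Hindman–Van der Waerden theorem. -/
theorem stmt0 (l : Cardinal.{u}) (hl : ℵ₀ ≤ l) (c d : ℕ) (hc : 0 < c) (hd : 0 < d) :
    ∃ κ : Cardinal.{u}, l < κ ∧
      ∀ (G : Type u) [AddCommSemigroup G], #G = κ →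
        ∀ f : G → Fin c, ∃ H : Set G, #H = l ∧
          ∃ a b : ℕ, 0 < a ∧ 0 < b ∧ ∃ i : Fin c,
            FSMono f {j | ∃ k ≤ d, j = a + k * b} H i :=
  stmt0_general l hl c d
end

section
/- For every infinite cardinal λ and every positive integer c, there exists a cardinal κ > λ such that for every coloring f of the set [κ]^{<ω} of finite subsets of κ in c colors, there exist a λ-sized family H of finite nonempty subsets of κ which is pairwise unmeshed (a block sequence) and positive integers a, b such that all unions of a-many, of b-many, and of (a+b)-many pairwise distinct members of H receive the same color under f. -/
open Cardinal

universe u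

/-- Two finite sets are unmeshed if all elements of one are below all elements of the other. -/
def Unmeshed {α : Type u} [LinearOrder α] (x y : Finset α) : Prop :=
  (∀ a ∈ x, ∀ b ∈ y, a < b) ∨ (∀ a ∈ y, ∀ b ∈ x, a < b)

/-- `FUMono f A H i` : all unions of `j`-many pairwise distinct members of `H`,
for `j ∈ A`, have color `i` under `f` (i.e. `FU^A(H)` is monochromatic of color `i`). -/
def FUMono {α : Type u} [LinearOrder α] {c : ℕ} (f : Finset α → Fin c)
    (A : Set ℕ) (H : Set (Finset α)) (i : Fin c) : Prop :=
  ∀ m ∈ A, ∀ g : Fin m → Finset α, Function.Injective g →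
    (∀ j, g j ∈ H) → f (Finset.univ.sup g) = i

/-!
By the Erdős–Rado argument (end-homogeneous sequences), the `n`-th iterate `κ` of
`κ ↦ (2 ^ κ)⁺` starting from `λ` satisfies `κ → (λ)ⁿ_γ` for every `γ` of size at most `λ`.
Coloring each `(N + 1)`-subset of `κ` by the `f`-colors of its initial segments yields a set `Y`
of size `λ` on whose subsets of size at most `N` the color of `f` depends only on the size.
The finite Schur theorem, obtained from Hindman's theorem by compactness, provides `a`, `b` with
`a + b ≤ N` on which this size coloring is constant, and the singletons of `Y` form the family.
-/

/-- The partition relation `#α → (l)^n_γ`. -/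
def PartitionArrow (α γ : Type u) (n : ℕ) (l : Cardinal.{u}) : Prop :=
  ∀ f : Finset α → γ, ∃ X : Set α, l ≤ #X ∧ ∃ i, ∀ s : Finset α, ↑s ⊆ X → s.card = n → f s = i

theorem mk_prod_finset_arrow_le {I γ : Type u} (hI : ℵ₀ ≤ #I) (hγ : #γ ≤ #I) :
    #(I × (Finset I → γ)) ≤ 2 ^ #I := by
  have : Infinite I := infinite_iff.mpr hI
  calc #(I × (Finset I → γ)) = #I * #γ ^ #I := by
        rw [mk_prod, lift_id, lift_id, ← power_def, mk_finset_of_infinite]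
    _ ≤ #I * #I ^ #I := by gcongr; exact power_le_power_right hγ
    _ = 2 ^ #I := by
        rw [power_self_eq hI,
          mul_eq_right (hI.trans (cantor _).le) (cantor _).le (aleph0_pos.trans_le hI).ne']

section EndHomogeneous

open Classical

variable {I α γ : Type u} [LinearOrder I] [WellFoundedLT I]

def endHomCandidates (f : Finset α → γ) (n : ℕ) (b : α) (S : Set α) : Set α :=
  {x | x ∉ S ∧ ∀ t : Finset α, ↑t ⊆ S → t.card = n → f (insert x t) = f (insert b t)}

/-- Each term is chosen, among the points not yet used, to be colored like the anchor `b`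
together with any `n` earlier terms; `b` itself is such a point as long as it is unused. -/
noncomputable def endHomSeq (f : Finset α → γ) (n : ℕ) (b : α) : I → α :=
  wellFounded_lt.fix fun ξ seq =>
    @Classical.epsilon α ⟨b⟩
      (· ∈ endHomCandidates f n b (Set.range fun η : Set.Iio ξ => seq η η.2))

variable {f : Finset α → γ} {n : ℕ}

theorem endHomSeq_eq (b : α) (ξ : I) :
    endHomSeq f n b ξ =
      @Classical.epsilon α ⟨b⟩ (· ∈ endHomCandidates f n b (endHomSeq f n b '' Set.Iio ξ)) := by
  rw [endHomSeq, WellFounded.fix_eq, Set.image_eq_range]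

theorem endHomSeq_mem_candidates {b : α} (hb : ∀ ξ : I, endHomSeq f n b ξ ≠ b) (ξ : I) :
    endHomSeq f n b ξ ∈ endHomCandidates f n b (endHomSeq f n b '' Set.Iio ξ) := by
  rw [endHomSeq_eq]
  refine @Classical.epsilon_spec α _ ⟨b, ?_, fun _ _ _ => rfl⟩
  rintro ⟨η, -, hη⟩
  exact hb η hη

theorem endHomSeq_injective {b : α} (hb : ∀ ξ : I, endHomSeq f n b ξ ≠ b) :
    Function.Injective (endHomSeq f n b : I → α) := by
  intro η ξ he
  by_contra hne
  rcases Ne.lt_or_gt hne with h | h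
  · exact (endHomSeq_mem_candidates hb ξ).1 ⟨η, h, he⟩
  · exact (endHomSeq_mem_candidates hb η).1 ⟨ξ, h, he.symm⟩

theorem endHomSeq_insert_image {b : α} (hb : ∀ ξ : I, endHomSeq f n b ξ ≠ b) {ξ : I}
    {u : Finset I} (hu : ∀ η ∈ u, η < ξ) (hcard : u.card = n) :
    f (insert (endHomSeq f n b ξ) (u.image (endHomSeq f n b))) =
      f (insert b (u.image (endHomSeq f n b))) := by
  refine (endHomSeq_mem_candidates hb ξ).2 _ ?_ ?_
  · rw [Finset.coe_image]
    exact Set.image_mono hu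
  · rw [Finset.card_image_of_injective _ (endHomSeq_injective hb), hcard]

theorem endHomSeq_congr {b b' : α}
    (h : ∀ u : Finset I, f (insert b (u.image (endHomSeq f n b))) =
      f (insert b' (u.image (endHomSeq f n b')))) :
    (endHomSeq f n b : I → α) = endHomSeq f n b' := by
  funext ξ
  induction ξ using WellFoundedLT.induction with
  | ind ξ ih =>
    have hS : endHomSeq f n b '' Set.Iio ξ = endHomSeq f n b' '' Set.Iio ξ :=
      Set.image_congr fun η hη => ih η hη
    have hcand : endHomCandidates f n b (endHomSeq f n b '' Set.Iio ξ) =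
        endHomCandidates f n b' (endHomSeq f n b' '' Set.Iio ξ) := by
      rw [← hS]
      suffices hbb' : ∀ t : Finset α, ↑t ⊆ endHomSeq f n b '' Set.Iio ξ →
          f (insert b t) = f (insert b' t) by
        ext x
        refine and_congr_right fun _ => forall_congr' fun t => imp_congr_right fun ht => ?_
        rw [hbb' t ht]
      intro t ht
      obtain ⟨u, hu, rfl⟩ := Finset.subset_set_image_iff.mp ht
      rw [h u, Finset.image_congr fun η hη => (ih η (hu hη)).symm]
    rw [endHomSeq_eq, endHomSeq_eq, hcand]

/-- Otherwise `b ↦ (ξ, u ↦ f (insert b (u.image (endHomSeq f n b))))`, with `ξ` a stage at which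
`b` is chosen, would inject `α` into a set of size `2 ^ #I`. -/
theorem exists_forall_endHomSeq_ne (hI : ℵ₀ ≤ #I) (hγ : #γ ≤ #I) (hα : 2 ^ #I < #α)
    (f : Finset α → γ) (n : ℕ) : ∃ b : α, ∀ ξ : I, endHomSeq f n b ξ ≠ b := by
  by_contra! hhit
  choose ξ hξ using hhit
  let code : α → I × (Finset I → γ) :=
    fun b => (ξ b, fun u => f (insert b (u.image (endHomSeq f n b))))
  have hcode : Function.Injective code := by
    intro b b' he
    obtain ⟨hξbb', hcolor⟩ := Prod.mk.inj he
    calc b = endHomSeq f n b (ξ b) := (hξ b).symm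
      _ = endHomSeq f n b' (ξ b') := by rw [endHomSeq_congr fun u => congrFun hcolor u, hξbb']
      _ = b' := hξ b'
  exact ((mk_le_of_injective hcode).trans (mk_prod_finset_arrow_le hI hγ)).not_gt hα

theorem PartitionArrow.succ {n : ℕ} {l : Cardinal.{u}} (h : PartitionArrow I γ n l)
    (hI : ℵ₀ ≤ #I) (hγ : #γ ≤ #I) (hα : 2 ^ #I < #α) : PartitionArrow α γ (n + 1) l := by
  intro f
  obtain ⟨b, hb⟩ := exists_forall_endHomSeq_ne hI hγ hα f n
  have hinj := endHomSeq_injective hb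
  obtain ⟨Y, hY, i, hi⟩ := h fun u => f (insert b (u.image (endHomSeq f n b)))
  refine ⟨endHomSeq f n b '' Y, by rwa [mk_image_eq hinj], i, fun s hs hcard => ?_⟩
  obtain ⟨u, huY, rfl⟩ := Finset.subset_set_image_iff.mp hs
  rw [Finset.card_image_of_injective _ hinj] at hcard
  have hu : u.Nonempty := Finset.card_pos.mp (by omega)
  have hmax := u.max'_mem hu
  have hcard' : (u.erase (u.max' hu)).card = n := by
    rw [Finset.card_erase_of_mem hmax, hcard]; rfl
  rw [← Finset.insert_erase hmax, Finset.image_insert,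
    endHomSeq_insert_image hb (fun η hη => u.lt_max'_of_mem_erase_max' hu hη) hcard']
  exact hi _ (fun η hη => huY (Finset.mem_of_mem_erase hη)) hcard'

end EndHomogeneous

noncomputable def erdosRadoCard (l : Cardinal.{u}) : ℕ → Cardinal.{u}
  | 0 => l
  | n + 1 => Order.succ (2 ^ erdosRadoCard l n)

theorem le_erdosRadoCard (l : Cardinal.{u}) : ∀ n, l ≤ erdosRadoCard l n
  | 0 => le_rfl
  | n + 1 => (le_erdosRadoCard l n).trans ((cantor _).le.trans (Order.le_succ _))

theorem lt_erdosRadoCard_succ (l : Cardinal.{u}) (n : ℕ) : l < erdosRadoCard l (n + 1) :=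
  (le_erdosRadoCard l n).trans_lt ((cantor _).trans_le (Order.le_succ _))

theorem partitionArrow_erdosRadoCard {l : Cardinal.{u}} (hl : ℵ₀ ≤ l) {γ : Type u}
    (hγ : #γ ≤ l) : ∀ n, PartitionArrow (erdosRadoCard l n).ord.ToType γ n l
  | 0 => fun f => ⟨Set.univ, by rw [mk_univ, mk_ord_toType]; rfl, f ∅,
      fun s _ hs => by rw [Finset.card_eq_zero.mp hs]⟩
  | n + 1 => by
    refine (partitionArrow_erdosRadoCard hl hγ n).succ ?_ ?_ ?_ <;> rw [mk_ord_toType]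
    · exact hl.trans (le_erdosRadoCard l n)
    · exact hγ.trans (le_erdosRadoCard l n)
    · rw [mk_ord_toType]
      exact Order.lt_succ _

theorem exists_schur_triple {κ : Type*} [Finite κ] (χ : ℕ → κ) :
    ∃ a b : ℕ, 0 < a ∧ 0 < b ∧ χ a = χ b ∧ χ b = χ (a + b) := by
  obtain ⟨-, ⟨i, rfl⟩, s, hs⟩ := Hindman.exists_FS_of_finite_cover
    (Set.range fun i : κ => {m : ℕ+ | χ m = i}) (Set.finite_range _)
    fun m _ => Set.mem_sUnion_of_mem (show m ∈ {m' : ℕ+ | χ m' = χ m} from rfl) ⟨χ m, rfl⟩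
  have h0 : χ (s.get 0) = i := hs (Hindman.FS.singleton s 0)
  have h1 : χ (s.get 1) = i := hs (Hindman.FS.singleton s 1)
  have h01 : χ ↑(s.get 0 + s.get 1) = i := hs (Hindman.FS.add_two s 0 1 one_pos)
  rw [PNat.add_coe] at h01
  exact ⟨s.get 0, s.get 1, (s.get 0).pos, (s.get 1).pos, h0.trans h1.symm, h1.trans h01.symm⟩

/-- The finite Schur theorem, by compactness: colorings without Schur triples below `N` for
every `N` would have a limit along an ultrafilter without any Schur triple. -/
theorem exists_schur_bound (κ : Type*) [Finite κ] :
    ∃ N : ℕ, ∀ χ : ℕ → κ,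
      ∃ a b : ℕ, 0 < a ∧ 0 < b ∧ a + b ≤ N ∧ χ a = χ b ∧ χ b = χ (a + b) := by
  by_contra! h
  choose χ hχ using h
  let U : Ultrafilter ℕ := Filter.hyperfilter ℕ
  have hlim : ∀ m, ∃ i, ∀ᶠ N in (U : Filter ℕ), χ N m = i := fun m => by
    obtain ⟨i, hi⟩ := (U.map fun N => χ N m).eq_pure_of_finite
    exact ⟨i, (Ultrafilter.mem_map (s := {i})).mp (hi ▸ Ultrafilter.mem_pure.mpr rfl)⟩
  choose lim hlim using hlim
  obtain ⟨a, b, ha, hb, hab, hbab⟩ := exists_schur_triple lim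
  have hlarge : ∀ᶠ N in (U : Filter ℕ), a + b ≤ N :=
    Filter.hyperfilter_le_cofinite (Nat.cofinite_eq_atTop ▸ Filter.eventually_ge_atTop (a + b))
  obtain ⟨N, hNa, hNb, hNab, hN⟩ :=
    ((hlim a).and ((hlim b).and ((hlim (a + b)).and hlarge))).exists
  exact hχ N a b ha hb hN (by rw [hNa, hNb, hab]) (by rw [hNb, hNab, hbab])

section InitialSegments
variable {α : Type u} [LinearOrder α]

/-- The `k` smallest elements of `s`. -/
def initSeg (s : Finset α) (k : ℕ) : Finset α :=
  s.filter fun x => (s.filter (· < x)).card < k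

theorem initSeg_union_of_forall_lt {t u : Finset α} (h : ∀ x ∈ t, ∀ y ∈ u, x < y) :
    initSeg (t ∪ u) t.card = t := by
  ext x
  simp only [initSeg, Finset.mem_filter, Finset.mem_union]
  constructor
  · rintro ⟨hx | hx, hrank⟩
    · exact hx
    · refine absurd hrank (not_lt.mpr (Finset.card_le_card fun y hy => ?_))
      exact Finset.mem_filter.mpr ⟨Finset.mem_union_left _ hy, h y hy x hx⟩
  · intro hx
    refine ⟨Or.inl hx,
      (Finset.card_le_card fun y hy => ?_).trans_lt (Finset.card_erase_lt_of_mem hx)⟩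
    obtain ⟨hy, hyx⟩ := Finset.mem_filter.mp hy
    rcases Finset.mem_union.mp hy with hy | hy
    · exact Finset.mem_erase.mpr ⟨hyx.ne, hy⟩
    · exact absurd (h x hx y hy) (not_lt.mpr hyx.le)

theorem finite_setOf_not_exists_card_eq_above (X : Set α) (N : ℕ) :
    {x ∈ X | ¬ ∃ u : Finset α, ↑u ⊆ X ∩ Set.Ioi x ∧ u.card = N}.Finite := by
  by_contra hinf
  obtain ⟨S, hS, hcard⟩ := Set.Infinite.exists_subset_card_eq hinf (N + 1)
  have hne : S.Nonempty := Finset.card_pos.mp (by omega)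
  refine (hS (S.min'_mem hne)).2 ⟨S.erase (S.min' hne), fun y hy => ?_, ?_⟩
  · exact ⟨(hS (Finset.mem_of_mem_erase hy)).1, S.min'_lt_of_mem_erase_min' hne hy⟩
  · rw [Finset.card_erase_of_mem (S.min'_mem hne), hcard, Nat.add_sub_cancel]

/-- Color an `N`-set by the colors of its initial segments; on a homogeneous set, every
nonempty set of size at most `N` that has `N` points of `X` above it is such an initial segment,
and all but finitely many points of `X` have `N` points above them. -/
theorem exists_subset_forall_card_eq_of_partitionArrow {l : Cardinal.{u}} (hl : ℵ₀ ≤ l)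
    {c N : ℕ} (hα : PartitionArrow α (ULift.{u} (Fin (N + 1) → Fin c)) N l)
    (f : Finset α → Fin c) :
    ∃ Y : Set α, #Y = l ∧ ∀ s t : Finset α, ↑s ⊆ Y → ↑t ⊆ Y → s.card = t.card → t.card ≤ N →
      f s = f t := by
  obtain ⟨X, hX, i, hi⟩ := hα fun s => ⟨fun k => f (initSeg s k)⟩
  let X' := {x ∈ X | ∃ u : Finset α, ↑u ⊆ X ∩ Set.Ioi x ∧ u.card = N}
  have hcolor : ∀ t : Finset α, ↑t ⊆ X' → t.Nonempty → ∀ ht : t.card ≤ N,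
      f t = i.down ⟨t.card, Nat.lt_succ_of_le ht⟩ := by
    intro t htX' hne ht
    obtain ⟨-, u, huX, hucard⟩ := htX' (t.max'_mem hne)
    obtain ⟨u', hu'u, hu'card⟩ :=
      Finset.exists_subset_card_eq (show N - t.card ≤ u.card by omega)
    have hlt : ∀ x ∈ t, ∀ y ∈ u', x < y :=
      fun x hx y hy => (t.le_max' x hx).trans_lt (huX (hu'u hy)).2
    have hunion : ↑(t ∪ u') ⊆ X := by
      rw [Finset.coe_union]
      exact Set.union_subset (fun x hx => (htX' hx).1) fun y hy => (huX (hu'u hy)).1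
    have hcard : (t ∪ u').card = N := by
      rw [Finset.card_union_of_disjoint (Finset.disjoint_left.mpr fun x hx hx' =>
        (hlt x hx x hx').false), hu'card]
      omega
    have := congrFun (congrArg ULift.down (hi _ hunion hcard)) ⟨t.card, Nat.lt_succ_of_le ht⟩
    dsimp only at this
    rwa [initSeg_union_of_forall_lt hlt] at this
  have hX'l : l ≤ #X' := by
    by_contra! hlt
    have hfin : (X \ X').Finite := (finite_setOf_not_exists_card_eq_above X N).subset
      fun x hx => ⟨hx.1, fun h => hx.2 ⟨hx.1, h⟩⟩
    exact (hX.trans (le_mk_sdiff_add_mk X X')).not_gt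
      (add_lt_of_lt hl ((mk_lt_aleph0_iff.mpr hfin).trans_le hl) hlt)
  obtain ⟨Y, hYX', hYl⟩ := le_mk_iff_exists_subset.mp hX'l
  refine ⟨Y, hYl, fun s t hs ht hst htN => ?_⟩
  rcases t.eq_empty_or_nonempty with rfl | hne
  · rw [Finset.card_empty, Finset.card_eq_zero] at hst
    rw [hst]
  · have hsne : s.Nonempty := Finset.card_pos.mp (hst ▸ Finset.card_pos.mpr hne)
    rw [hcolor s (hs.trans hYX') hsne (hst ▸ htN), hcolor t (ht.trans hYX') hne htN]
    simp only [hst]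

end InitialSegments

theorem unmeshed_singleton {α : Type u} [LinearOrder α] {x y : α} (h : x ≠ y) :
    Unmeshed {x} {y} := by
  simpa [Unmeshed] using h.lt_or_gt

theorem exists_finset_eq_sup_of_injective_singleton {α : Type*} [DecidableEq α] {Y : Set α}
    {m : ℕ} {g : Fin m → Finset α} (hg : Function.Injective g)
    (hgY : ∀ j, g j ∈ (fun y => ({y} : Finset α)) '' Y) :
    ∃ t : Finset α, ↑t ⊆ Y ∧ t.card = m ∧ Finset.univ.sup g = t := by
  choose y hyY hgy using hgY
  have hy : Function.Injective y := fun j k h => hg (by rw [← hgy j, ← hgy k, h])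
  refine ⟨Finset.univ.image y, by simpa [Set.range_subset_iff] using hyY, ?_, ?_⟩
  · rw [Finset.card_image_of_injective _ hy, Finset.card_univ, Fintype.card_fin]
  · rw [← funext hgy, Finset.sup_eq_biUnion, Finset.biUnion_singleton]

theorem fuMono_image_singleton {α : Type u} [LinearOrder α] {c : ℕ} {f : Finset α → Fin c}
    {A : Set ℕ} {Y : Set α} {i : Fin c} (h : ∀ t : Finset α, ↑t ⊆ Y → t.card ∈ A → f t = i) :
    FUMono f A ((fun y => {y}) '' Y) i := by
  intro m hm g hg hgY
  obtain ⟨t, htY, rfl, hsup⟩ := exists_finset_eq_sup_of_injective_singleton hg hgY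
  rw [hsup]
  exact h t htY hm

theorem stmt3_general (l : Cardinal.{u}) (hl : ℵ₀ ≤ l) (c : ℕ) :
    ∃ κ : Cardinal.{u}, l < κ ∧
      ∀ f : Finset κ.ord.ToType → Fin c,
        ∃ H : Set (Finset κ.ord.ToType), #H = l ∧ (∀ x ∈ H, x.Nonempty) ∧
          H.Pairwise Unmeshed ∧
          ∃ a b : ℕ, 0 < a ∧ 0 < b ∧ ∃ i : Fin c, FUMono f {a, b, a + b} H i := by
  obtain ⟨N, hN⟩ := exists_schur_bound (Fin c)
  refine ⟨erdosRadoCard l (N + 1), lt_erdosRadoCard_succ l N, fun f => ?_⟩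
  have hcolors : #(ULift.{u} (Fin (N + 2) → Fin c)) ≤ l := (lt_aleph0_of_finite _).le.trans hl
  obtain ⟨Y, hYl, hY⟩ := exists_subset_forall_card_eq_of_partitionArrow hl
    (partitionArrow_erdosRadoCard hl hcolors (N + 1)) f
  have hYinf : Y.Infinite := Set.infinite_coe_iff.mp (infinite_iff.mpr (hl.trans hYl.ge))
  choose sample hsampleY hsample using hYinf.exists_subset_card_eq
  obtain ⟨a, b, ha, hb, hsum, hab, hbsum⟩ := hN fun m => f (sample m)
  refine ⟨(fun y => {y}) '' Y, by rw [mk_image_eq Finset.singleton_injective, hYl], ?_, ?_,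
    a, b, ha, hb, f (sample a), fuMono_image_singleton fun t htY ht => ?_⟩
  · rintro _ ⟨y, -, rfl⟩
    exact Finset.singleton_nonempty y
  · rintro _ ⟨x, -, rfl⟩ _ ⟨y, -, rfl⟩ hxy
    exact unmeshed_singleton (ne_of_apply_ne _ hxy)
  · have htN : t.card ≤ N + 1 := by
      rcases ht with h | h | h <;> rw [h] <;> omega
    rw [← hY (sample t.card) t (hsampleY _) htY (hsample _) htN]
    rcases ht with h | h | h <;> rw [h]
    exacts [hab.symm, (hab.trans hbsum).symm]

/-- Uncountable Hindman–Schur theorem with unmeshedness. -/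
theorem stmt3 (l : Cardinal.{u}) (hl : ℵ₀ ≤ l) (c : ℕ) (hc : 0 < c) :
    ∃ κ : Cardinal.{u}, l < κ ∧
      ∀ f : Finset κ.ord.ToType → Fin c,
        ∃ H : Set (Finset κ.ord.ToType), #H = l ∧ (∀ x ∈ H, x.Nonempty) ∧
          H.Pairwise Unmeshed ∧
          ∃ a b : ℕ, 0 < a ∧ 0 < b ∧ ∃ i : Fin c, FUMono f {a, b, a + b} H i :=
  stmt3_general l hl c
end

section
/- Let λ be an infinite cardinal and let d : [κ]² → 2 be a 2-coloring of pairs from κ. Define c : [κ]^{<ω} → 3 by: c(x) = 2 if |x| is odd; otherwise, writing x = y ∪ z with |y| = |z| and max(y) < min(z), set c(x) = d(max(y), max(z)). Suppose H is a λ-sized pairwise unmeshed family of finite nonempty subsets of κ, all of the same cardinality, and b is an even positive integer such that all unions of b-many distinct members of H get the same c-color i. Then i ∈ {0,1} and there exists X ⊆ κ with |X| = λ such that d is constant of value i on [X]². -/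
open Cardinal

universe u

/-!
Send each member of `H` to its maximum. As `H` is unmeshed, this map is injective and a member
with the smaller maximum lies entirely below the other, so the maxima form a well-ordered set `T`
of size `λ`. Writing `b = 2m`, embed `λ` blocks of `m` points, laid end to end, order-preservingly
into `T` (possible as `m · λ = λ` for the initial ordinal `λ`), and let `X` be the set of last
points of the blocks. For `p < q` in `X`, the members of `H` with maxima in the blocks of `p` and
`q` are `b` distinct members whose union splits as `y ∪ z` with `|y| = |z|`, `max y = p` and
`max z = q`, so `i = c(y ∪ z) = d(p, q)`.
-/

section Unions

variable {α : Type*} [LinearOrder α]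

def Precedes (x y : Finset α) : Prop :=
  ∀ a ∈ x, ∀ b ∈ y, a < b

theorem Precedes.disjoint {x y : Finset α} (h : Precedes x y) : Disjoint x y :=
  Finset.disjoint_left.2 fun a hx hy => (h a hx a hy).false

theorem Precedes.max'_lt {x y : Finset α} (h : Precedes x y) (hx : x.Nonempty)
    (hy : y.Nonempty) : x.max' hx < y.max' hy :=
  h _ (x.max'_mem hx) _ (y.max'_mem hy)

theorem Set.Pairwise.precedes_of_max'_lt {H : Set (Finset α)} (hum : H.Pairwise Unmeshed)
    {x y : Finset α} (hxH : x ∈ H) (hyH : y ∈ H) (hx : x.Nonempty) (hy : y.Nonempty)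
    (hlt : x.max' hx < y.max' hy) : Precedes x y := by
  have hxy : x ≠ y := by
    rintro rfl
    exact hlt.false
  refine (hum hxH hyH hxy).resolve_right fun hyx => ?_
  exact (hlt.trans (Precedes.max'_lt hyx hy hx)).false

theorem Set.Pairwise.max'_ne {H : Set (Finset α)} (hum : H.Pairwise Unmeshed)
    {x y : Finset α} (hxH : x ∈ H) (hyH : y ∈ H) (hxy : x ≠ y) (hx : x.Nonempty)
    (hy : y.Nonempty) : x.max' hx ≠ y.max' hy := by
  rcases hum hxH hyH hxy with h | h
  · exact (Precedes.max'_lt h hx hy).ne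
  · exact (Precedes.max'_lt h hy hx).ne'

variable {ι : Type*} [Fintype ι] [LinearOrder ι]

theorem Finset.card_univ_sup_of_precedes {f : ι → Finset α} {n : ℕ}
    (hf : ∀ i j, i < j → Precedes (f i) (f j)) (hcard : ∀ i, (f i).card = n) :
    (Finset.univ.sup f).card = Fintype.card ι * n := by
  rw [Finset.sup_eq_biUnion, Finset.card_biUnion]
  · simp [hcard]
  · intro i _ j _ hij
    rcases hij.lt_or_gt with h | h
    · exact (hf i j h).disjoint
    · exact (hf j i h).disjoint.symm

theorem Finset.max'_univ_sup_of_precedes [OrderTop ι] {f : ι → Finset α}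
    (hf : ∀ i j, i < j → Precedes (f i) (f j)) (hne : ∀ i, (f i).Nonempty)
    (hs : (Finset.univ.sup f).Nonempty) :
    (Finset.univ.sup f).max' hs = (f ⊤).max' (hne ⊤) := by
  refine le_antisymm (Finset.max'_le _ _ _ fun a ha => ?_)
    (Finset.le_max' _ _ (Finset.mem_sup.2 ⟨⊤, Finset.mem_univ _, Finset.max'_mem _ _⟩))
  obtain ⟨i, -, hai⟩ := Finset.mem_sup.1 ha
  rcases (le_top : i ≤ ⊤).eq_or_lt with rfl | hi
  · exact Finset.le_max' _ a hai
  · exact (hf i ⊤ hi a hai _ (Finset.max'_mem _ _)).le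

theorem Fin.univ_sup_add {m n : ℕ} (g : Fin (m + n) → Finset α) :
    Finset.univ.sup g =
      Finset.univ.sup (g ∘ Fin.castAdd n) ∪ Finset.univ.sup (g ∘ Fin.natAdd m) := by
  ext a
  simp only [Finset.mem_union, Finset.mem_sup, Finset.mem_univ, true_and, Function.comp_apply]
  refine ⟨fun ⟨i, hi⟩ => ?_, ?_⟩
  · induction i using Fin.addCases with
    | left i => exact Or.inl ⟨i, hi⟩
    | right i => exact Or.inr ⟨i, hi⟩
  · rintro (⟨i, hi⟩ | ⟨i, hi⟩) <;> exact ⟨_, hi⟩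

end Unions

theorem Fin.strictMono_append {α : Type*} [Preorder α] {m n : ℕ} {u : Fin m → α}
    {v : Fin n → α} (hu : StrictMono u) (hv : StrictMono v) (huv : ∀ i j, u i < v j) :
    StrictMono (Fin.append u v) := by
  intro i j hij
  induction i using Fin.addCases with
  | left i =>
    induction j using Fin.addCases with
    | left j => simpa using hu ((Fin.strictMono_castAdd n).lt_iff_lt.1 hij)
    | right j => simpa using huv i j
  | right i =>
    induction j using Fin.addCases with
    | left j => exact absurd hij (by simp [Fin.lt_def]; omega)
    | right j => simpa using hv ((Fin.natAdd_lt_natAdd_iff m).1 hij)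

section Spread

open Ordinal

variable {α : Type u} [LinearOrder α] [WellFoundedLT α]

theorem exists_orderEmbedding_lex_fin (h : ℵ₀ ≤ #α) (m : ℕ) :
    Nonempty ((#α).ord.ToType ×ₗ Fin m ↪o α) := by
  have hle : type (Prod.Lex ((· < ·) : (#α).ord.ToType → _ → Prop)
      ((· < ·) : ULift.{u} (Fin m) → _ → Prop)) ≤ typeLT α := by
    rw [type_prod_lex, type_lt_ulift, type_fin, Ordinal.lift_natCast, type_toType]
    rcases m.eq_zero_or_pos with rfl | hm
    · simp
    have hm_lt : (m : Ordinal) < (#α).ord :=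
      lt_ord.2 (by simpa using natCast_lt_aleph0.trans_le h)
    rw [isPrincipal_mul_iff_mul_left_eq.1 (isPrincipal_mul_ord h) m (by exact_mod_cast hm) hm_lt,
      ord_le, card_type]
  obtain ⟨f⟩ := type_le_iff'.1 hle
  refine ⟨OrderEmbedding.ofStrictMono (fun x => f ((ofLex x).1, ULift.up (ofLex x).2)) ?_⟩
  intro x y hxy
  exact f.map_rel_iff.2 (Prod.lex_def.2 (Prod.Lex.lt_iff.1 hxy : _))

theorem exists_forall_lt_exists_strictMono {l : Cardinal.{u}} (hl : ℵ₀ ≤ l)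
    {T : Set α} (hT : #T = l) (k : ℕ) :
    ∃ X : Set α, #X = l ∧ ∀ p ∈ X, ∀ q ∈ X, p < q →
      ∃ w : Fin (k + 1 + (k + 1)) → α, StrictMono w ∧ (∀ j, w j ∈ T) ∧
        w (Fin.castAdd (k + 1) (Fin.last k)) = p ∧ w (Fin.natAdd (k + 1) (Fin.last k)) = q := by
  obtain ⟨e⟩ := exists_orderEmbedding_lex_fin (α := T) (hT ▸ hl) (k + 1)
  let block (β : (#T).ord.ToType) (j : Fin (k + 1)) : α := e (toLex (β, j))
  have hblock {β γ} (hβγ : β < γ) (i j) : block β i < block γ j :=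
    e.strictMono (Prod.Lex.toLex_lt_toLex.2 (Or.inl hβγ))
  have hblock_mono (β) : StrictMono (block β) := fun i j hij =>
    e.strictMono (Prod.Lex.toLex_lt_toLex.2 (Or.inr ⟨rfl, hij⟩))
  have htop : StrictMono fun β => block β (Fin.last k) := fun β γ hβγ => hblock hβγ _ _
  refine ⟨Set.range fun β => block β (Fin.last k), ?_, ?_⟩
  · rw [mk_range_eq _ htop.injective, mk_ord_toType, hT]
  · rintro _ ⟨β, rfl⟩ _ ⟨γ, rfl⟩ hlt
    refine ⟨Fin.append (block β) (block γ),
      Fin.strictMono_append (hblock_mono β) (hblock_mono γ) fun i j => hblock ?_ i j,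
      fun j => ?_, Fin.append_left _ _ _, Fin.append_right _ _ _⟩
    · exact htop.lt_iff_lt.1 hlt
    · induction j using Fin.addCases with
      | left j => rw [Fin.append_left]; exact (e _).2
      | right j => rw [Fin.append_right]; exact (e _).2

end Spread

theorem color_univ_sup_eq_castLE {α : Type*} [LinearOrder α] (d : α → α → Fin 2)
    (c : Finset α → Fin 3)
    (heven : ∀ (y z : Finset α) (hy : y.Nonempty) (hz : z.Nonempty),
      y.card = z.card → (∀ p ∈ y, ∀ q ∈ z, p < q) →
        c (y ∪ z) = Fin.castLE (Nat.le_succ 2) (d (y.max' hy) (z.max' hz)))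
    {k n : ℕ} (g : Fin (k + 1 + (k + 1)) → Finset α) (hne : ∀ j, (g j).Nonempty)
    (hcard : ∀ j, (g j).card = n) (hg : ∀ i j, i < j → Precedes (g i) (g j)) :
    c (Finset.univ.sup g) = Fin.castLE (Nat.le_succ 2)
      (d ((g (Fin.castAdd _ (Fin.last k))).max' (hne _))
        ((g (Fin.natAdd _ (Fin.last k))).max' (hne _))) := by
  have hleft : ∀ i j, i < j →
      Precedes ((g ∘ Fin.castAdd (k + 1)) i) ((g ∘ Fin.castAdd (k + 1)) j) :=
    fun i j hij => hg _ _ (Fin.strictMono_castAdd _ hij)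
  have hright : ∀ i j, i < j →
      Precedes ((g ∘ Fin.natAdd (k + 1)) i) ((g ∘ Fin.natAdd (k + 1)) j) :=
    fun i j hij => hg _ _ (Fin.strictMono_natAdd _ hij)
  have hy : (Finset.univ.sup (g ∘ Fin.castAdd (k + 1))).Nonempty :=
    (hne _).mono (Finset.le_sup (f := g ∘ Fin.castAdd _) (Finset.mem_univ ⊤))
  have hz : (Finset.univ.sup (g ∘ Fin.natAdd (k + 1))).Nonempty :=
    (hne _).mono (Finset.le_sup (f := g ∘ Fin.natAdd _) (Finset.mem_univ ⊤))
  have hyz : Precedes (Finset.univ.sup (g ∘ Fin.castAdd (k + 1)))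
      (Finset.univ.sup (g ∘ Fin.natAdd (k + 1))) := by
    intro a ha b hb
    obtain ⟨i, -, hai⟩ := Finset.mem_sup.1 ha
    obtain ⟨j, -, hbj⟩ := Finset.mem_sup.1 hb
    exact hg _ _ (by simp [Fin.lt_def]; omega) a hai b hbj
  rw [Fin.univ_sup_add, heven _ _ hy hz (by
      rw [Finset.card_univ_sup_of_precedes hleft fun _ => hcard _,
        Finset.card_univ_sup_of_precedes hright fun _ => hcard _]) hyz,
    Finset.max'_univ_sup_of_precedes hleft (fun _ => hne _),
    Finset.max'_univ_sup_of_precedes hright (fun _ => hne _)]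
  rfl

theorem FUMono.castLE_eq_of_strictMono_max' {α : Type u} [LinearOrder α] (d : α → α → Fin 2)
    (c : Finset α → Fin 3)
    (heven : ∀ (y z : Finset α) (hy : y.Nonempty) (hz : z.Nonempty),
      y.card = z.card → (∀ p ∈ y, ∀ q ∈ z, p < q) →
        c (y ∪ z) = Fin.castLE (Nat.le_succ 2) (d (y.max' hy) (z.max' hz)))
    {H : Set (Finset α)} (hne : ∀ x ∈ H, x.Nonempty) (hum : H.Pairwise Unmeshed)
    {n : ℕ} (hn : ∀ x ∈ H, x.card = n) {k : ℕ} {i : Fin 3}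
    (hmono : FUMono c {k + 1 + (k + 1)} H i) (g : Fin (k + 1 + (k + 1)) → Finset α)
    (hgH : ∀ j, g j ∈ H) (hg : StrictMono fun j => (g j).max' (hne _ (hgH j))) :
    Fin.castLE (Nat.le_succ 2) (d ((g (Fin.castAdd _ (Fin.last k))).max' (hne _ (hgH _)))
      ((g (Fin.natAdd _ (Fin.last k))).max' (hne _ (hgH _)))) = i := by
  have hprec : ∀ i j, i < j → Precedes (g i) (g j) := fun i j hij =>
    hum.precedes_of_max'_lt (hgH i) (hgH j) _ _ (hg hij)
  have hinj : Function.Injective g := fun i j hij => hg.injective <| by simp only [hij]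
  have hsup := hmono _ rfl g hinj hgH
  rwa [color_univ_sup_eq_castLE d c heven g (fun j => hne _ (hgH j)) (fun j => hn _ (hgH j))
    hprec] at hsup

/-- Core of the lower-bound argument: from a monochromatic set of b-fold unions of an
unmeshed same-cardinality family, extract a monochromatic set for the pair coloring d. -/
theorem stmt10 (l κ : Cardinal.{u}) (hl : ℵ₀ ≤ l)
    (d : κ.ord.ToType → κ.ord.ToType → Fin 2)
    (c : Finset κ.ord.ToType → Fin 3)
    (heven : ∀ (y z : Finset κ.ord.ToType) (hy : y.Nonempty) (hz : z.Nonempty),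
      y.card = z.card → (∀ p ∈ y, ∀ q ∈ z, p < q) →
        c (y ∪ z) = Fin.castLE (by omega) (d (y.max' hy) (z.max' hz)))
    (H : Set (Finset κ.ord.ToType)) (hHcard : #H = l)
    (hne : ∀ x ∈ H, x.Nonempty) (hum : H.Pairwise Unmeshed)
    (n : ℕ) (hn : ∀ x ∈ H, x.card = n)
    (b : ℕ) (hb : 0 < b) (hbe : Even b) (i : Fin 3)
    (hmono : FUMono c {b} H i) :
    i ≠ 2 ∧ ∃ X : Set κ.ord.ToType, #X = l ∧
      ∀ x ∈ X, ∀ y ∈ X, x < y → (d x y).val = i.val := by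
  obtain ⟨m, rfl⟩ := hbe
  obtain ⟨k, rfl⟩ : ∃ k, m = k + 1 := Nat.exists_eq_add_one.2 (by omega)
  let μ (s : H) : κ.ord.ToType := s.1.max' (hne s s.2)
  have hμ : Function.Injective μ := fun s t hst => Subtype.ext <| by_contra fun h =>
    hum.max'_ne s.2 t.2 h _ _ hst
  obtain ⟨X, hX, hspread⟩ := exists_forall_lt_exists_strictMono hl
    (T := Set.range μ) (by rw [mk_range_eq μ hμ, hHcard]) k
  have hd : ∀ p ∈ X, ∀ q ∈ X, p < q → (d p q).val = i.val := by
    intro p hp q hq hpq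
    obtain ⟨w, hw, hwμ, rfl, rfl⟩ := hspread p hp q hq hpq
    choose S hS using hwμ
    obtain rfl : (fun j => μ (S j)) = w := funext hS
    exact congrArg Fin.val
      (hmono.castLE_eq_of_strictMono_max' d c heven hne hum hn _ (fun j => (S j).2) hw)
  have hXinf : X.Infinite := Set.infinite_coe_iff.1 (Cardinal.infinite_iff.2 (hX ▸ hl))
  obtain ⟨p, hp, q, hq, hpq⟩ := hXinf.nontrivial.exists_lt
  refine ⟨fun hi => ?_, X, hX, hd⟩
  have := hd p hp q hq hpq
  simp only [hi] at this
  omega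
end
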